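/- The polar of a reflexive integral polyhedron is itself a reflexive integral polyhedron with respect to the dual lattice. -/

import Mathlib

/-!
Write `P = conv S` with `S` a finite set of lattice points, so that `P°` is the compact set cut
out by the inequalities `⟨x, s⟩ ≥ -1`, `s ∈ S`. At a vertex `x` of `P°` the tight inequalities
span, so `x` is determined by its tight set (there are finitely many vertices, and `P°` is their
convex hull by Krein–Milman) and `{⟨x, ·⟩ = -1}` is a facet hyperplane of `P`; reflexivity of `P`
makes `x` integral. Dually, a facet hyperplane `{⟨u, ·⟩ = c}` of `P°` has `c < 0` because `0` is
interior, and `u / (-c)` is a vertex of `P°° = P`, hence a point of `S`.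
-/

open Finset

/-- The standard pairing between `ℝⁿ` and its dual (identified with `ℝⁿ`). -/
def pairR {n : ℕ} (x y : Fin n → ℝ) : ℝ := ∑ i, x i * y i

/-- A point of `M_ℝ = ℝⁿ` is integral if it lies in the lattice `M = ℤⁿ`. -/
def IsIntegralPt {n : ℕ} (x : Fin n → ℝ) : Prop := ∀ i, ∃ z : ℤ, x i = (z : ℝ)

/-- The polar `P° = {x | ⟨x,y⟩ ≥ -1 for all y ∈ P}`. -/
def polarSet {n : ℕ} (P : Set (Fin n → ℝ)) : Set (Fin n → ℝ) :=
  {x | ∀ y ∈ P, -1 ≤ pairR x y}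

/-- An integral (lattice) polytope: the convex hull of finitely many lattice points. -/
def IsLatticePolytope {n : ℕ} (P : Set (Fin n → ℝ)) : Prop :=
  ∃ S : Finset (Fin n → ℝ), (∀ x ∈ S, IsIntegralPt x) ∧
    P = convexHull ℝ (S : Set (Fin n → ℝ))

/-- `{y | ⟨u,y⟩ = c}` is a supporting hyperplane of `P` cutting out a
codimension-one face. -/
def IsCodimOneSupport {n : ℕ} (P : Set (Fin n → ℝ)) (u : Fin n → ℝ) (c : ℝ) : Prop :=
  u ≠ 0 ∧ (∀ y ∈ P, c ≤ pairR u y) ∧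
  Module.finrank ℝ (affineSpan ℝ {y ∈ P | pairR u y = c}).direction = n - 1

/-- A reflexive polytope: an integral polytope with `0` in its interior all of whose
codimension-one supporting hyperplanes have the form `{y | ⟨ℓ,y⟩ = -1}` with `ℓ`
in the dual lattice. -/
def IsReflexive {n : ℕ} (P : Set (Fin n → ℝ)) : Prop :=
  IsLatticePolytope P ∧ (0 : Fin n → ℝ) ∈ interior P ∧
  ∀ u : Fin n → ℝ, ∀ c : ℝ, IsCodimOneSupport P u c →
    ∃ ℓ : Fin n → ℤ, {y : Fin n → ℝ | pairR u y = c} =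
      {y : Fin n → ℝ | pairR (fun i => (ℓ i : ℝ)) y = -1}

open Module Filter Topology

section AffineSpan

variable {K V : Type*} [Field K] [AddCommGroup V] [Module K V] [FiniteDimensional K V]

theorem finrank_direction_affineSpan_add_one {f : Dual K V} {c : K} (hc : c ≠ 0) {F : Set V}
    (hF : ∀ y ∈ F, f y = c) {x₀ : V} (hx₀ : x₀ ∈ F) :
    finrank K (affineSpan K F).direction + 1 = finrank K (Submodule.span K F) := by
  rw [direction_affineSpan]
  have hker : vectorSpan K F ≤ LinearMap.ker f := by
    rw [vectorSpan_def, Submodule.span_le]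
    rintro _ ⟨a, ha, b, hb, rfl⟩
    simp [hF a ha, hF b hb]
  have hsup : Submodule.span K F = vectorSpan K F ⊔ K ∙ x₀ := by
    refine le_antisymm (Submodule.span_le.2 fun y hy => ?_) (sup_le ?_ ?_)
    · rw [← sub_add_cancel y x₀]
      exact Submodule.add_mem_sup (vsub_mem_vectorSpan K hy hx₀)
        (Submodule.mem_span_singleton_self x₀)
    · rw [vectorSpan_def, Submodule.span_le]
      rintro _ ⟨a, ha, b, hb, rfl⟩
      exact sub_mem (Submodule.subset_span ha) (Submodule.subset_span hb)
    · exact Submodule.span_mono (Set.singleton_subset_iff.2 hx₀)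
  have hinf : vectorSpan K F ⊓ (K ∙ x₀) = ⊥ := by
    refine eq_bot_iff.2 fun z ⟨hzF, hz⟩ => ?_
    obtain ⟨t, rfl⟩ := Submodule.mem_span_singleton.1 hz
    have : t * c = 0 := by simpa [hF x₀ hx₀] using hker hzF
    simp [(mul_eq_zero.1 this).resolve_right hc]
  have hx₀ne : x₀ ≠ 0 := fun h => hc (by simpa [h] using (hF x₀ hx₀).symm)
  have := Submodule.finrank_sup_add_finrank_inf_eq (vectorSpan K F) (K ∙ x₀)
  rw [hinf, finrank_bot, finrank_span_singleton hx₀ne] at this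
  rw [hsup]
  omega

theorem span_eq_top_iff_finrank_direction_affineSpan_add_one {f : Dual K V} {c : K} (hc : c ≠ 0)
    {F : Set V} (hF : ∀ y ∈ F, f y = c) {x₀ : V} (hx₀ : x₀ ∈ F) :
    Submodule.span K F = ⊤ ↔ finrank K (affineSpan K F).direction + 1 = finrank K V := by
  rw [finrank_direction_affineSpan_add_one hc hF hx₀]
  exact ⟨fun h => by rw [h, finrank_top], Submodule.eq_top_of_finrank_eq⟩

end AffineSpan

section DotProduct

variable {ι : Type*} [Fintype ι] [DecidableEq ι]

theorem dotProductEquiv_symm_dotProduct {K : Type*} [CommSemiring K] (f : Dual K (ι → K))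
    (y : ι → K) : (dotProductEquiv K ι).symm f ⬝ᵥ y = f y :=
  LinearMap.congr_fun ((dotProductEquiv K ι).apply_symm_apply f) y

theorem span_eq_top_iff_forall_dotProduct_eq_zero {K : Type*} [Field K] {F : Set (ι → K)} :
    Submodule.span K F = ⊤ ↔ ∀ w : ι → K, (∀ y ∈ F, w ⬝ᵥ y = 0) → w = 0 := by
  refine ⟨fun hF w hw => ?_, fun h => ?_⟩
  · exact (dotProductEquiv K ι).map_eq_zero_iff.1 <|
      LinearMap.ext_on hF fun y hy => by simpa using hw y hy
  · by_contra hne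
    obtain ⟨f, hf, hmap⟩ :=
      Submodule.exists_dual_map_eq_bot_of_lt_top (lt_top_iff_ne_top.2 hne) inferInstance
    refine hf ((dotProductEquiv K ι).symm.map_eq_zero_iff.1 (h _ fun y hy => ?_))
    have hfy : f y = 0 := by
      simpa [hmap] using Submodule.mem_map_of_mem (f := f) (Submodule.subset_span hy)
    rw [dotProductEquiv_symm_dotProduct, hfy]

end DotProduct

section Hyperplane

variable {ι : Type*} [Fintype ι]

theorem eq_of_setOf_dotProduct_eq_neg_one_eq {u ℓ : ι → ℝ} (hu : u ≠ 0)
    (h : {y | u ⬝ᵥ y = -1} = {y | ℓ ⬝ᵥ y = -1}) : u = ℓ := by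
  set y₀ := -(u ⬝ᵥ u)⁻¹ • u
  have hy₀ : u ⬝ᵥ y₀ = -1 := by
    simp [y₀, dotProduct_smul, inv_mul_cancel₀ (dotProduct_self_eq_zero.not.2 hu)]
  -- `z + (u ⬝ᵥ z) • y₀` lies in the kernel of `u`, so its translate by `y₀` is in the hyperplane
  have hmem (z : ι → ℝ) : y₀ + z + (u ⬝ᵥ z) • y₀ ∈ {y | ℓ ⬝ᵥ y = -1} := by
    rw [← h]
    simp only [Set.mem_ofPred_eq, dotProduct_add, dotProduct_smul, smul_eq_mul, hy₀]
    ring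
  have hℓ (z : ι → ℝ) : u ⬝ᵥ z = ℓ ⬝ᵥ z := by
    have h₀ := hmem 0
    have hz := hmem z
    simp only [Set.mem_ofPred_eq, dotProduct_add, dotProduct_smul, smul_eq_mul, dotProduct_zero,
      zero_mul, add_zero] at h₀ hz
    rw [h₀] at hz
    linarith
  rw [← sub_eq_zero, ← dotProduct_self_eq_zero, sub_dotProduct, hℓ, sub_self]

theorem setOf_dotProduct_eq_of_ne_zero {u : ι → ℝ} {c : ℝ} (hc : c ≠ 0) :
    {y | u ⬝ᵥ y = c} = {y | ((-c)⁻¹ • u) ⬝ᵥ y = -1} := by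
  ext y
  rw [Set.mem_ofPred_eq, Set.mem_ofPred_eq, smul_dotProduct, smul_eq_mul,
    inv_mul_eq_iff_eq_mul₀ (neg_ne_zero.2 hc)]
  constructor <;> intro h <;> linarith

end Hyperplane

section Polar

variable {n : ℕ}

theorem pairR_eq_dotProduct (x y : Fin n → ℝ) : pairR x y = x ⬝ᵥ y := rfl

theorem span_eq_top_iff_finrank_direction_affineSpan_eq {v : Fin n → ℝ} {F : Set (Fin n → ℝ)}
    (hF : ∀ y ∈ F, v ⬝ᵥ y = -1) {x₀ : Fin n → ℝ} (hx₀ : x₀ ∈ F) :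
    Submodule.span ℝ F = ⊤ ↔ finrank ℝ (affineSpan ℝ F).direction = n - 1 := by
  have hn : n ≠ 0 := by
    rintro rfl
    simpa [dotProduct] using hF x₀ hx₀
  rw [span_eq_top_iff_finrank_direction_affineSpan_add_one (f := dotProductEquiv ℝ (Fin n) v)
    (by norm_num) (fun y hy => hF y hy) hx₀, finrank_fin_fun]
  omega

theorem polarSet_eq_iInter (P : Set (Fin n → ℝ)) :
    polarSet P = ⋂ y ∈ P, {x | -1 ≤ x ⬝ᵥ y} := by
  ext x
  simp [polarSet, pairR_eq_dotProduct]

theorem convex_polarSet (P : Set (Fin n → ℝ)) : Convex ℝ (polarSet P) := by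
  rw [polarSet_eq_iInter]
  exact convex_iInter₂ fun y _ =>
    convex_halfSpace_ge ⟨fun a b => add_dotProduct a b y, fun c a => smul_dotProduct c a y⟩ _

theorem isClosed_polarSet (P : Set (Fin n → ℝ)) : IsClosed (polarSet P) := by
  rw [polarSet_eq_iInter]
  exact isClosed_biInter fun y _ =>
    isClosed_le continuous_const (continuous_id.dotProduct continuous_const)

theorem mem_polarSet_convexHull {S : Set (Fin n → ℝ)} {x : Fin n → ℝ} :
    x ∈ polarSet (convexHull ℝ S) ↔ ∀ s ∈ S, -1 ≤ x ⬝ᵥ s :=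
  (convex_halfSpace_ge ⟨dotProduct_add x, fun c y => dotProduct_smul c x y⟩ _).convexHull_subset_iff

theorem subset_polarSet_polarSet (P : Set (Fin n → ℝ)) : P ⊆ polarSet (polarSet P) :=
  fun y hy x hx => by rw [pairR_eq_dotProduct, dotProduct_comm]; exact hx y hy

theorem polarSet_polarSet {P : Set (Fin n → ℝ)} (hc : IsClosed P) (hconv : Convex ℝ P)
    (h0 : 0 ∈ P) : polarSet (polarSet P) = P := by
  refine subset_antisymm (fun x hx => ?_) (subset_polarSet_polarSet P)
  by_contra hxP
  obtain ⟨f, α, hfx, hfP⟩ := geometric_hahn_banach_point_closed hconv hc hxP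
  have hα : 0 < -α := by simpa using hfP 0 h0
  -- rescaling the separating functional puts it in the polar of `P`
  set w := (-α)⁻¹ • (dotProductEquiv ℝ (Fin n)).symm (f : Dual ℝ (Fin n → ℝ))
  have hw (y : Fin n → ℝ) : w ⬝ᵥ y = (-α)⁻¹ * f y := by
    rw [smul_dotProduct, dotProductEquiv_symm_dotProduct, smul_eq_mul]
    rfl
  have hwP : w ∈ polarSet P := fun y hy => by
    rw [pairR_eq_dotProduct, hw, le_inv_mul_iff₀ hα]
    linarith [hfP y hy]
  have hxw := hx w hwP
  rw [pairR_eq_dotProduct, dotProduct_comm, hw, le_inv_mul_iff₀ hα] at hxw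
  linarith

theorem isCompact_polarSet {P : Set (Fin n → ℝ)} (h0 : 0 ∈ interior P) :
    IsCompact (polarSet P) := by
  obtain ⟨ε, hε, hball⟩ := Metric.mem_nhds_iff.1 (mem_interior_iff_mem_nhds.1 h0)
  refine Metric.isCompact_of_isClosed_isBounded (isClosed_polarSet P)
    ((Metric.isBounded_iff_subset_closedBall 0).2 ⟨2 / ε, fun x hx => ?_⟩)
  rw [mem_closedBall_zero_iff, pi_norm_le_iff_of_nonneg (by positivity)]
  intro i
  have key (t : ℝ) (ht : |t| < ε) : -1 ≤ x i * t := by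
    have : Pi.single i t ∈ Metric.ball (0 : Fin n → ℝ) ε := by simpa [Pi.norm_single] using ht
    simpa [pairR_eq_dotProduct, dotProduct_single] using hx _ (hball this)
  have h₁ := key (ε / 2) (by rw [abs_of_pos (half_pos hε)]; linarith)
  have h₂ := key (-(ε / 2)) (by rw [abs_neg, abs_of_pos (half_pos hε)]; linarith)
  rw [Real.norm_eq_abs, le_div_iff₀ hε, ← abs_of_pos hε, ← abs_mul, abs_le]
  constructor <;> linarith

theorem zero_mem_interior_polarSet_convexHull (S : Finset (Fin n → ℝ)) :
    0 ∈ interior (polarSet (convexHull ℝ (S : Set (Fin n → ℝ)))) := by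
  have hS : ∀ᶠ x in 𝓝 (0 : Fin n → ℝ), ∀ s ∈ S, -1 < x ⬝ᵥ s :=
    S.eventually_all.2 fun s _ => ((continuous_id.dotProduct continuous_const).tendsto' 0 0
      (zero_dotProduct s)).eventually_const_lt (by norm_num)
  refine mem_interior_iff_mem_nhds.2 (hS.mono fun x hx => ?_)
  exact mem_polarSet_convexHull.2 fun s hs => (hx s hs).le

theorem neg_of_forall_le_dotProduct {K : Set (Fin n → ℝ)} (h0 : 0 ∈ interior K) {u : Fin n → ℝ}
    (hu : u ≠ 0) {c : ℝ} (hc : ∀ y ∈ K, c ≤ u ⬝ᵥ y) : c < 0 := by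
  have hK : ∀ᶠ t in 𝓝 (0 : ℝ), t • u ∈ K :=
    ((continuous_id.smul continuous_const).tendsto' 0 0 (zero_smul ℝ u)).eventually
      (mem_interior_iff_mem_nhds.1 h0)
  obtain ⟨t, htK, ht⟩ :=
    ((hK.filter_mono nhdsWithin_le_nhds).and (self_mem_nhdsWithin (s := Set.Iio 0))).exists
  have huu : 0 < u ⬝ᵥ u := by simpa using Matrix.dotProduct_self_star_pos_iff.2 hu
  calc c ≤ u ⬝ᵥ (t • u) := hc _ htK
    _ = t * (u ⬝ᵥ u) := by rw [dotProduct_smul, smul_eq_mul]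
    _ < 0 := mul_neg_of_neg_of_pos ht huu

end Polar

section ExtremePoints

variable {n : ℕ}

def activeSet (S : Finset (Fin n → ℝ)) (x : Fin n → ℝ) : Set (Fin n → ℝ) :=
  {s ∈ (S : Set (Fin n → ℝ)) | x ⬝ᵥ s = -1}

theorem span_activeSet_eq_top {S : Finset (Fin n → ℝ)} {x : Fin n → ℝ}
    (hx : x ∈ (polarSet (convexHull ℝ (S : Set (Fin n → ℝ)))).extremePoints ℝ) :
    Submodule.span ℝ (activeSet S x) = ⊤ := by
  refine span_eq_top_iff_forall_dotProduct_eq_zero.2 fun w hw => ?_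
  have hxS := mem_polarSet_convexHull.1 hx.1
  -- moving `x` slightly along `w` keeps the active constraints tight and the others strict
  have hmove : ∀ᶠ t in 𝓝 (0 : ℝ), x + t • w ∈ polarSet (convexHull ℝ (S : Set (Fin n → ℝ))) := by
    refine (S.eventually_all.2 fun s hs => ?_).mono fun t ht => mem_polarSet_convexHull.2 ht
    by_cases hact : x ⬝ᵥ s = -1
    · refine Eventually.of_forall fun t => ?_
      rw [add_dotProduct, smul_dotProduct, hw s ⟨hs, hact⟩, smul_zero, add_zero]
      exact hxS s hs
    · have hcont : Continuous fun t : ℝ => (x + t • w) ⬝ᵥ s :=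
        (continuous_const.add (continuous_id.smul continuous_const)).dotProduct continuous_const
      exact ((hcont.tendsto' 0 _ (by simp)).eventually_const_lt
        ((hxS s hs).lt_of_ne (Ne.symm hact))).mono fun t ht => ht.le
  obtain ⟨ε, hε, hball⟩ := Metric.eventually_nhds_iff.1 hmove
  have hδ : |ε| / 2 < ε := by rw [abs_of_pos hε]; linarith
  have hplus := hball (y := ε / 2) (by simpa using hδ)
  have hminus := hball (y := -(ε / 2)) (by simpa using hδ)
  have hmid := hx.2 hplus hminus
    ⟨1 / 2, 1 / 2, by norm_num, by norm_num, by norm_num, by module⟩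
  simpa [(half_pos hε).ne'] using hmid

theorem finite_extremePoints_polarSet_convexHull (S : Finset (Fin n → ℝ)) :
    ((polarSet (convexHull ℝ (S : Set (Fin n → ℝ)))).extremePoints ℝ).Finite := by
  refine Set.Finite.of_finite_image (f := activeSet S)
    (S.finite_toSet.finite_subsets.subset ?_) fun x hx x' hx' hxx' => ?_
  · rintro _ ⟨x, -, rfl⟩ s hs
    exact hs.1
  · refine sub_eq_zero.1 (span_eq_top_iff_forall_dotProduct_eq_zero.1
      (span_activeSet_eq_top hx) _ fun s hs => ?_)
    have hs' : s ∈ activeSet S x' := hxx' ▸ hs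
    rw [sub_dotProduct, hs.2, hs'.2, sub_self]

theorem polarSet_eq_convexHull_extremePoints {P : Set (Fin n → ℝ)} (h0 : 0 ∈ interior P)
    (hfin : ((polarSet P).extremePoints ℝ).Finite) :
    polarSet P = convexHull ℝ ((polarSet P).extremePoints ℝ) :=
  (closure_convexHull_extremePoints (isCompact_polarSet h0) (convex_polarSet P)).symm.trans
    (hfin.isCompact_convexHull ℝ).isClosed.closure_eq

theorem mem_extremePoints_polarSet {K : Set (Fin n → ℝ)} {v : Fin n → ℝ} (hv : v ∈ polarSet K)
    (hspan : Submodule.span ℝ {y ∈ K | v ⬝ᵥ y = -1} = ⊤) :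
    v ∈ (polarSet K).extremePoints ℝ := by
  refine ⟨hv, fun a ha b hb ⟨ta, tb, hta, htb, htab, hab⟩ => ?_⟩
  have htight (y) (hy : y ∈ {y ∈ K | v ⬝ᵥ y = -1}) : a ⬝ᵥ y = -1 := by
    have hay := ha y hy.1
    have hby := hb y hy.1
    have hvy := hy.2
    rw [← hab, add_dotProduct, smul_dotProduct, smul_dotProduct, smul_eq_mul, smul_eq_mul] at hvy
    rw [pairR_eq_dotProduct] at hay hby
    nlinarith
  refine sub_eq_zero.1 (span_eq_top_iff_forall_dotProduct_eq_zero.1 hspan _ fun y hy => ?_)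
  rw [sub_dotProduct, htight y hy, hy.2, sub_self]

end ExtremePoints

section Reflexive

variable {n : ℕ}

/-- The third conjunct of `IsReflexive`. -/
def HasIntegralFacets (P : Set (Fin n → ℝ)) : Prop :=
  ∀ u : Fin n → ℝ, ∀ c : ℝ, IsCodimOneSupport P u c →
    ∃ ℓ : Fin n → ℤ, {y : Fin n → ℝ | pairR u y = c} =
      {y : Fin n → ℝ | pairR (fun i => (ℓ i : ℝ)) y = -1}

theorem isIntegralPt_iff {x : Fin n → ℝ} :
    IsIntegralPt x ↔ ∃ ℓ : Fin n → ℤ, (fun i => (ℓ i : ℝ)) = x :=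
  ⟨fun h => ⟨fun i => (h i).choose, funext fun i => (h i).choose_spec.symm⟩,
    fun ⟨ℓ, hℓ⟩ i => ⟨ℓ i, hℓ ▸ rfl⟩⟩

theorem HasIntegralFacets.isIntegralPt_of_mem_extremePoints_polarSet
    {S : Finset (Fin n → ℝ)} (hS : HasIntegralFacets (convexHull ℝ (S : Set (Fin n → ℝ))))
    {x : Fin n → ℝ} (hx : x ∈ (polarSet (convexHull ℝ (S : Set (Fin n → ℝ)))).extremePoints ℝ) :
    IsIntegralPt x := by
  have hspan := span_activeSet_eq_top hx
  rcases (activeSet S x).eq_empty_or_nonempty with hempty | ⟨s, hs⟩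
  · rw [hempty] at hspan
    rw [span_eq_top_iff_forall_dotProduct_eq_zero.1 hspan x (by simp)]
    exact fun i => ⟨0, by simp⟩
  have hx0 : x ≠ 0 := by
    rintro rfl
    simpa using hs.2
  set F := {y ∈ convexHull ℝ (S : Set (Fin n → ℝ)) | x ⬝ᵥ y = -1}
  have hTF : activeSet S x ⊆ F := fun s hs => ⟨subset_convexHull ℝ _ hs.1, hs.2⟩
  have hFspan : Submodule.span ℝ F = ⊤ := top_unique (hspan ▸ Submodule.span_mono hTF)
  have hdim :=
    (span_eq_top_iff_finrank_direction_affineSpan_eq (fun y hy => hy.2) (hTF hs)).1 hFspan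
  obtain ⟨ℓ, hℓ⟩ := hS x (-1) ⟨hx0, hx.1, hdim⟩
  exact isIntegralPt_iff.2 ⟨ℓ, (eq_of_setOf_dotProduct_eq_neg_one_eq hx0 hℓ).symm⟩

theorem hasIntegralFacets_polarSet_convexHull (hn : n ≠ 1) {S : Finset (Fin n → ℝ)}
    (hS : ∀ s ∈ S, IsIntegralPt s) (h0 : 0 ∈ interior (convexHull ℝ (S : Set (Fin n → ℝ)))) :
    HasIntegralFacets (polarSet (convexHull ℝ (S : Set (Fin n → ℝ)))) := by
  rintro u c ⟨hu, hmin, hdim⟩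
  simp only [pairR_eq_dotProduct] at hmin ⊢
  set P := convexHull ℝ (S : Set (Fin n → ℝ))
  have hc := neg_of_forall_le_dotProduct (zero_mem_interior_polarSet_convexHull S) hu hmin
  have hH := setOf_dotProduct_eq_of_ne_zero (u := u) hc.ne
  set v := (-c)⁻¹ • u
  have hF : {y ∈ polarSet P | pairR u y = c} = {y ∈ polarSet P | v ⬝ᵥ y = -1} := by
    ext y
    exact and_congr_right fun _ => Set.ext_iff.1 hH y
  rw [hF] at hdim
  obtain ⟨x₀, hx₀⟩ : {y ∈ polarSet P | v ⬝ᵥ y = -1}.Nonempty := by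
    refine Set.nonempty_iff_ne_empty.2 fun hempty => ?_
    rw [hempty, AffineSubspace.span_empty, AffineSubspace.direction_bot, finrank_bot] at hdim
    have : n ≠ 0 := by
      rintro rfl
      exact hu (Subsingleton.elim _ _)
    omega
  have hspan := (span_eq_top_iff_finrank_direction_affineSpan_eq (fun y hy => hy.2) hx₀).2 hdim
  have hv : v ∈ polarSet (polarSet P) := fun y hy => by
    rw [pairR_eq_dotProduct, smul_dotProduct, smul_eq_mul, le_inv_mul_iff₀ (neg_pos.2 hc)]
    linarith [hmin y hy]
  have hvext := mem_extremePoints_polarSet hv hspan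
  rw [polarSet_polarSet (S.finite_toSet.isCompact_convexHull ℝ).isClosed (convex_convexHull ℝ _)
    (interior_subset h0)] at hvext
  obtain ⟨ℓ, hℓ⟩ := isIntegralPt_iff.1 (hS v (extremePoints_convexHull_subset hvext))
  exact ⟨ℓ, hH.trans (by rw [hℓ])⟩

theorem not_isReflexive_fin_one (P : Set (Fin 1 → ℝ)) : ¬ IsReflexive P := by
  rintro ⟨⟨S, -, rfl⟩, -, hP⟩
  set u : Fin 1 → ℝ := fun _ => 1
  obtain ⟨m, hm⟩ := (S.finite_toSet.isCompact_convexHull ℝ).bddBelow_image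
    (f := (u ⬝ᵥ ·)) (continuous_const.dotProduct continuous_id).continuousOn
  -- a level `c` below `conv S` meets it in the empty face, whose dimension is `0 = 1 - 1`
  set c := min m 0 - 2
  have hcm : ∀ y ∈ convexHull ℝ (S : Set (Fin 1 → ℝ)), c < u ⬝ᵥ y := fun y hy => by
    have := hm ⟨y, hy, rfl⟩
    linarith [min_le_left m 0]
  have hempty : {y ∈ convexHull ℝ (S : Set (Fin 1 → ℝ)) | pairR u y = c} = ∅ :=
    Set.eq_empty_iff_forall_notMem.2 fun y hy => (hcm y hy.1).ne' hy.2
  have hu : u ≠ 0 := fun h => one_ne_zero (congrFun h 0)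
  obtain ⟨ℓ, hℓ⟩ := hP u c ⟨hu, fun y hy => (hcm y hy).le, by
    rw [hempty, AffineSubspace.span_empty, AffineSubspace.direction_bot, finrank_bot]⟩
  have hℓc : (ℓ 0 : ℝ) * c = -1 := by
    have : (fun _ => c) ∈ {y : Fin 1 → ℝ | pairR u y = c} := by simp [pairR, u]
    rw [hℓ] at this
    simpa [pairR] using this
  have hc : c ≤ -2 := by linarith [min_le_right m 0]
  rcases le_or_gt (ℓ 0) 0 with h | h
  · have : (ℓ 0 : ℝ) ≤ 0 := by exact_mod_cast h
    nlinarith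
  · have : (1 : ℝ) ≤ ℓ 0 := by exact_mod_cast h
    nlinarith

end Reflexive

/-- The polar of a reflexive integral polyhedron is itself a reflexive
integral polyhedron with respect to the dual lattice. -/
theorem polar_of_reflexive_is_reflexive {n : ℕ} (P : Set (Fin n → ℝ))
    (hP : IsReflexive P) : IsReflexive (polarSet P) := by
  rcases eq_or_ne n 1 with rfl | hn
  · exact absurd hP (not_isReflexive_fin_one P)
  obtain ⟨⟨S, hS, rfl⟩, h0, hfacets⟩ := hP
  have hfin := finite_extremePoints_polarSet_convexHull S
  refine ⟨⟨hfin.toFinset, fun x hx => ?_, ?_⟩, zero_mem_interior_polarSet_convexHull S,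
    hasIntegralFacets_polarSet_convexHull hn hS h0⟩
  · exact HasIntegralFacets.isIntegralPt_of_mem_extremePoints_polarSet hfacets
      (hfin.mem_toFinset.1 hx)
  · rw [hfin.coe_toFinset]
    exact polarSet_eq_convexHull_extremePoints h0 hfin
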